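/- Let n, μ, q, m be natural numbers with q ≥ 1, μ ≥ 1, and n ≥ q + μ. Then, over the real numbers, (∏_{k=0}^{q−1} (n−μ−k)/(n−k))^m ≥ exp(−q·μ·m/(n−q+1−μ)). -/

import Mathlib

/-!
Each factor satisfies `(n - μ - k)/(n - k) ≥ 1 - μ/(n - q + 1)`, so the product is at least
`(1 - μ/(n - q + 1))^q`. Taking `x = 1 - μ/(n - q + 1)` in `log x ≥ 1 - 1/x` gives
`x ≥ exp (-μ/(n - q + 1 - μ))`, and raising to the power `q m` finishes the proof.
-/

open Finset Real

lemma sub_div_self_le_sub_div_self {b c d : ℝ} (hc : 0 ≤ c) (hb : 0 < b) (hbd : b ≤ d) :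
    (b - c) / b ≤ (d - c) / d := by
  rw [sub_div, sub_div, div_self hb.ne', div_self (hb.trans_le hbd).ne']
  exact sub_le_sub_left (div_le_div_of_nonneg_left hc hb hbd) 1

lemma exp_neg_div_sub_le_sub_div {b c : ℝ} (hc : 0 ≤ c) (hcb : c < b) :
    exp (-(c / (b - c))) ≤ (b - c) / b := by
  have hpos : 0 < (b - c) / b := div_pos (sub_pos.mpr hcb) (hc.trans_lt hcb)
  refine (le_log_iff_exp_le hpos).mp ?_
  calc -(c / (b - c)) = 1 - ((b - c) / b)⁻¹ := by
        field_simp [(sub_pos.mpr hcb).ne', (hc.trans_lt hcb).ne']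
        ring
    _ ≤ log ((b - c) / b) := one_sub_inv_le_log_of_pos hpos

theorem stmt_12_general (n μ q m : ℕ) (hn : q + μ ≤ n) :
    Real.exp (-((q : ℝ) * μ * m / ((n : ℝ) - q + 1 - μ)))
      ≤ (∏ k ∈ Finset.range q, ((n : ℝ) - μ - k) / ((n : ℝ) - k)) ^ m := by
  have hn' : (q : ℝ) + μ ≤ n := by exact_mod_cast hn
  set b : ℝ := n - q + 1
  have hμb : (μ : ℝ) < b := by linarith
  have hx : 0 ≤ (b - μ) / b := div_nonneg (by linarith) (by linarith)
  have hfactor : ∀ k ∈ range q, (b - μ) / b ≤ ((n : ℝ) - μ - k) / ((n : ℝ) - k) := by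
    intro k hk
    have hkq : (k : ℝ) + 1 ≤ q := by exact_mod_cast mem_range.mp hk
    rw [sub_right_comm]
    exact sub_div_self_le_sub_div_self μ.cast_nonneg (by linarith) (by linarith)
  have hprod : ((b - μ) / b) ^ q ≤ ∏ k ∈ range q, ((n : ℝ) - μ - k) / ((n : ℝ) - k) := by
    simpa only [prod_const, card_range] using prod_le_prod (fun _ _ ↦ hx) hfactor
  calc exp (-((q : ℝ) * μ * m / (b - μ))) = exp (-(μ / (b - μ))) ^ (q * m) := by
        rw [← exp_nat_mul]
        push_cast
        ring_nf
    _ ≤ ((b - μ) / b) ^ (q * m) :=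
        pow_le_pow_left₀ (exp_pos _).le (exp_neg_div_sub_le_sub_div μ.cast_nonneg hμb) _
    _ = (((b - μ) / b) ^ q) ^ m := pow_mul _ _ _
    _ ≤ _ := pow_le_pow_left₀ (pow_nonneg hx q) hprod m

/-- For `q ≥ 1`, `μ ≥ 1` and `n ≥ q + μ`,
`(∏_{k=0}^{q-1} (n-μ-k)/(n-k))^m ≥ exp(-q·μ·m/(n-q+1-μ))`. -/
theorem stmt_12 (n μ q m : ℕ) (hq : 1 ≤ q) (hμ : 1 ≤ μ) (hn : q + μ ≤ n) :
    Real.exp (-((q : ℝ) * μ * m / ((n : ℝ) - q + 1 - μ)))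
      ≤ (∏ k ∈ Finset.range q, ((n : ℝ) - μ - k) / ((n : ℝ) - k)) ^ m :=
  stmt_12_general n μ q m hn
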